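/- Let Γ be a vertex-transitive graph possessing a vertex-transitive group G of automorphisms admitting a nontrivial imprimitivity block system 𝔅 on V(Γ), and suppose there exists a block B ∈ 𝔅 such that each vertex of B has exactly one neighbor outside B and no two vertices of B have a neighbor in the same block B' ∈ 𝔅 with B' ≠ B. Identify G with its faithful induced action on the quotient graph Γ_𝔅, and let O_B be the set of all pairs {B_u, B_w} of blocks, where u, w ∈ B are adjacent in Γ and B_x denotes the block containing the unique neighbor of x ∈ B outside B. Then O_B is a union of orbits of the action of the stabilizer G_B on the 2-element subsets of the neighborhood of B in Γ_𝔅, the orbital graph (Γ_𝔅(B), O_B) is isomorphic to the subgraph of Γ induced on B, and Γ is isomorphic to the generalized truncation T(Γ_𝔅, G; O_B). -/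

import Mathlib

/-!
Every vertex `x` has a unique neighbour `m x` outside its block (transport the hypothesis on `B`
along the transitive group `G`), and distinct vertices of one block send their external edges
into distinct blocks. Hence `x ↦ (B_x, B_{m x})` is a bijection from `V(Γ)` onto the darts of
`Γ_𝔅`. The external edges `{x, m x}` become the dart reversals of the truncation, and an edge
`{x, x'}` inside a block, moved into `B` by some `g ∈ G`, becomes the pair
`{B_{m (g x)}, B_{m (g x')}} ∈ O_B`; conversely such a pair determines the edge, since `m`
separates the vertices of `B`. Restricted to `B`, the same map is the isomorphism between `Γ[B]`
and the orbital graph.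
-/

open SimpleGraph

variable {V : Type*}

/-- A permutation of the vertices is an automorphism of the graph. -/
def IsAut (Γ : SimpleGraph V) (π : Equiv.Perm V) : Prop :=
  ∀ a b : V, Γ.Adj (π a) (π b) ↔ Γ.Adj a b

/-- The generalized truncation `T(Γ,G;O_v)`: its vertices are the darts `(u,w)` of `Γ`;
`(u,w)` is adjacent to `(w,u)` (blue edges), and `(u,w)` is adjacent to `(u,w')` whenever
there is a `g ∈ G` with `u^g = v` and `{w^g, w'^g} ∈ O` (red edges). -/
def truncT (Γ : SimpleGraph V) (G : Set (Equiv.Perm V)) (v : V) (O : Set (Sym2 V)) :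
    SimpleGraph {p : V × V // Γ.Adj p.1 p.2} :=
  SimpleGraph.fromRel (fun x y =>
    (y.1.1 = x.1.2 ∧ y.1.2 = x.1.1) ∨
    (x.1.1 = y.1.1 ∧ ∃ g ∈ G, g x.1.1 = v ∧ s(g x.1.2, g y.1.2) ∈ O))

/-- The orbital graph `(Γ(v), O)`: vertex set is the neighborhood of `v`, edge set `O`. -/
def orbitalGraph (Γ : SimpleGraph V) (v : V) (O : Set (Sym2 V)) :
    SimpleGraph (Γ.neighborSet v) :=
  SimpleGraph.fromRel (fun a b => s((a : V), (b : V)) ∈ O)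

/-- The lift of an automorphism `g` of `Γ` to a permutation of the darts of `Γ`,
`(u,w) ↦ (u^g, w^g)`. -/
def liftPerm (Γ : SimpleGraph V) (g : Equiv.Perm V) (hg : IsAut Γ g) :
    Equiv.Perm {p : V × V // Γ.Adj p.1 p.2} :=
  Equiv.Perm.subtypePerm (Equiv.prodCongr g g) (fun x => hg x.1 x.2)

/-- The quotient graph of `Γ` with respect to a partition (given as a setoid): two
blocks are adjacent iff they are distinct and contain adjacent representatives. -/
def quotG {V : Type*} (Γ : SimpleGraph V) (σ : Setoid V) : SimpleGraph (Quotient σ) :=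
  SimpleGraph.fromRel (fun B B' =>
    ∃ a b : V, Quotient.mk σ a = B ∧ Quotient.mk σ b = B' ∧ Γ.Adj a b)

/-- `Ĝ`: the permutations of the blocks induced by elements of `G`. -/
def inducedPerms (G : Subgroup (Equiv.Perm V)) (σ : Setoid V) : Set (Equiv.Perm (Quotient σ)) :=
  {π | ∃ g ∈ G, ∀ a : V, π (Quotient.mk σ a) = Quotient.mk σ (g a)}

/-- `O_B` for the block `B` of `b`. -/
def blockPairs (Γ : SimpleGraph V) (σ : Setoid V) (b : V) : Set (Sym2 (Quotient σ)) :=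
  {p | ∃ u w y z : V, σ.r u b ∧ σ.r w b ∧ Γ.Adj u w ∧ Γ.Adj u y ∧ ¬ σ.r y b ∧
    Γ.Adj w z ∧ ¬ σ.r z b ∧ p = s(Quotient.mk σ y, Quotient.mk σ z)}

def IsExternalNeighborMap (Γ : SimpleGraph V) (σ : Setoid V) (m : V → V) : Prop :=
  ∀ x y, Γ.Adj x y ∧ ¬ σ.r y x ↔ y = m x

/-- Injectivity of `blockDart σ m` says that distinct vertices of a block have their external
neighbours in distinct blocks. -/
def blockDart (σ : Setoid V) (m : V → V) (x : V) : Quotient σ × Quotient σ :=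
  (Quotient.mk σ x, Quotient.mk σ (m x))

section

variable {Γ : SimpleGraph V} {σ : Setoid V}

theorem quotG_adj_iff {A C : Quotient σ} :
    (quotG Γ σ).Adj A C ↔
      A ≠ C ∧ ∃ a b, Quotient.mk σ a = A ∧ Quotient.mk σ b = C ∧ Γ.Adj a b := by
  rw [quotG, fromRel_adj]
  refine and_congr_right fun _ => or_iff_left_of_imp ?_
  rintro ⟨a, b, ha, hb, hab⟩
  exact ⟨b, a, hb, ha, hab.symm⟩

theorem quotG_adj_mk {a b : V} (hab : Γ.Adj a b) (hba : ¬ σ.r b a) :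
    (quotG Γ σ).Adj (Quotient.mk σ a) (Quotient.mk σ b) :=
  quotG_adj_iff.2 ⟨fun h => hba (Quotient.exact h.symm), a, b, rfl, rfl, hab⟩

theorem eq_of_blockDart_injective {m : V → V} (hsep : Function.Injective (blockDart σ m))
    {x x' : V} (hxx' : σ.r x x') (hm' : σ.r (m x) (m x')) : x = x' :=
  hsep (Prod.ext (Quotient.sound hxx') (Quotient.sound hm'))

namespace IsExternalNeighborMap

variable {m : V → V}

theorem adj (hm : IsExternalNeighborMap Γ σ m) (x : V) : Γ.Adj x (m x) :=
  ((hm x (m x)).2 rfl).1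

theorem not_rel (hm : IsExternalNeighborMap Γ σ m) (x : V) : ¬ σ.r (m x) x :=
  ((hm x (m x)).2 rfl).2

theorem eq_of_adj (hm : IsExternalNeighborMap Γ σ m) {x y : V} (hxy : Γ.Adj x y)
    (hyx : ¬ σ.r y x) : y = m x :=
  (hm x y).1 ⟨hxy, hyx⟩

theorem apply_apply (hm : IsExternalNeighborMap Γ σ m) (x : V) : m (m x) = x :=
  (hm.eq_of_adj (hm.adj x).symm fun h => hm.not_rel x (σ.symm' h)).symm

theorem not_rel_of_rel (hm : IsExternalNeighborMap Γ σ m) {x b : V} (hx : σ.r x b) :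
    ¬ σ.r (m x) b :=
  fun h => hm.not_rel x (σ.trans' h (σ.symm' hx))

theorem quotG_adj (hm : IsExternalNeighborMap Γ σ m) (x : V) :
    (quotG Γ σ).Adj (Quotient.mk σ x) (Quotient.mk σ (m x)) :=
  quotG_adj_mk (hm.adj x) (hm.not_rel x)

theorem exists_of_quotG_adj (hm : IsExternalNeighborMap Γ σ m) {A C : Quotient σ}
    (h : (quotG Γ σ).Adj A C) : ∃ x, Quotient.mk σ x = A ∧ Quotient.mk σ (m x) = C := by
  obtain ⟨hne, a, b, rfl, rfl, hab⟩ := quotG_adj_iff.1 h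
  refine ⟨a, rfl, ?_⟩
  rw [← hm.eq_of_adj hab fun hba => hne (Quotient.sound (σ.symm' hba))]

theorem map_apply (hm : IsExternalNeighborMap Γ σ m) {g : Equiv.Perm V} (hg : IsAut Γ g)
    (hgσ : ∀ a b, σ.r (g a) (g b) ↔ σ.r a b) (x : V) : g (m x) = m (g x) :=
  hm.eq_of_adj ((hg _ _).2 (hm.adj x)) ((hgσ _ _).not.2 (hm.not_rel x))

theorem adj_iff (hm : IsExternalNeighborMap Γ σ m) {x x' : V} :
    Γ.Adj x x' ↔ x' = m x ∨ σ.r x x' ∧ Γ.Adj x x' := by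
  refine ⟨fun h => ?_, fun h => h.elim (fun h => h ▸ hm.adj x) And.right⟩
  by_cases hxx' : σ.r x x'
  · exact Or.inr ⟨hxx', h⟩
  · exact Or.inl (hm.eq_of_adj h fun h' => hxx' (σ.symm' h'))

theorem mem_blockPairs_iff (hm : IsExternalNeighborMap Γ σ m) {b : V} {p : Sym2 (Quotient σ)} :
    p ∈ blockPairs Γ σ b ↔ ∃ x x', σ.r x b ∧ σ.r x' b ∧ Γ.Adj x x' ∧
      p = s(Quotient.mk σ (m x), Quotient.mk σ (m x')) := by
  constructor
  · rintro ⟨u, w, y, z, hu, hw, huw, huy, hy, hwz, hz, rfl⟩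
    rw [hm.eq_of_adj huy fun h => hy (σ.trans' h hu),
      hm.eq_of_adj hwz fun h => hz (σ.trans' h hw)]
    exact ⟨u, w, hu, hw, huw, rfl⟩
  · rintro ⟨x, x', hx, hx', hxx', rfl⟩
    exact ⟨x, x', m x, m x', hx, hx', hxx', hm.adj x, hm.not_rel_of_rel hx, hm.adj x',
      hm.not_rel_of_rel hx', rfl⟩

theorem mk_mem_blockPairs_iff (hm : IsExternalNeighborMap Γ σ m)
    (hsep : Function.Injective (blockDart σ m))
    {b x x' : V} (hx : σ.r x b) (hx' : σ.r x' b) :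
    s(Quotient.mk σ (m x), Quotient.mk σ (m x')) ∈ blockPairs Γ σ b ↔ Γ.Adj x x' := by
  refine ⟨fun h => ?_, fun h => hm.mem_blockPairs_iff.2 ⟨x, x', hx, hx', h, rfl⟩⟩
  obtain ⟨u, w, hu, hw, huw, hp⟩ := hm.mem_blockPairs_iff.1 h
  have hblock {c d : V} (hc : σ.r c b) (hd : σ.r d b)
      (h : Quotient.mk σ (m c) = Quotient.mk σ (m d)) : c = d :=
    eq_of_blockDart_injective hsep (σ.trans' hc (σ.symm' hd)) (Quotient.exact h)
  rcases Sym2.eq_iff.1 hp with ⟨h₁, h₂⟩ | ⟨h₁, h₂⟩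
  · rwa [hblock hx hu h₁, hblock hx' hw h₂]
  · rw [hblock hx hw h₁, hblock hx' hu h₂]
    exact huw.symm

theorem not_isDiag_of_mem_blockPairs (hm : IsExternalNeighborMap Γ σ m)
    (hsep : Function.Injective (blockDart σ m)) {b : V} {p : Sym2 (Quotient σ)}
    (hp : p ∈ blockPairs Γ σ b) : ¬ p.IsDiag := by
  obtain ⟨x, x', hx, hx', hxx', rfl⟩ := hm.mem_blockPairs_iff.1 hp
  exact fun h => hxx'.ne (eq_of_blockDart_injective hsep (σ.trans' hx (σ.symm' hx'))
    (Quotient.exact (Sym2.mk_isDiag_iff.1 h)))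

theorem quotG_adj_of_mem_blockPairs (hm : IsExternalNeighborMap Γ σ m) {b : V}
    {p : Sym2 (Quotient σ)} (hp : p ∈ blockPairs Γ σ b) {C : Quotient σ} (hC : C ∈ p) :
    (quotG Γ σ).Adj (Quotient.mk σ b) C := by
  obtain ⟨x, x', hx, hx', -, rfl⟩ := hm.mem_blockPairs_iff.1 hp
  rcases Sym2.mem_iff.1 hC with rfl | rfl
  · exact Quotient.sound hx ▸ hm.quotG_adj x
  · exact Quotient.sound hx' ▸ hm.quotG_adj x'

theorem reverse_dart_iff (hm : IsExternalNeighborMap Γ σ m)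
    (hsep : Function.Injective (blockDart σ m)) {x x' : V} :
    Quotient.mk σ x' = Quotient.mk σ (m x) ∧ Quotient.mk σ (m x') = Quotient.mk σ x ↔
      x' = m x := by
  refine ⟨fun ⟨h₁, h₂⟩ => eq_of_blockDart_injective hsep (Quotient.exact h₁) ?_, ?_⟩
  · rw [hm.apply_apply]
    exact Quotient.exact h₂
  · rintro rfl
    rw [hm.apply_apply]
    exact ⟨rfl, rfl⟩

noncomputable def blockEquivNeighborSet (hm : IsExternalNeighborMap Γ σ m)
    (hsep : Function.Injective (blockDart σ m)) (b : V) :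
    {x | σ.r x b} ≃ (quotG Γ σ).neighborSet (Quotient.mk σ b) :=
  Equiv.ofBijective (fun x => ⟨Quotient.mk σ (m x), Quotient.sound x.2 ▸ hm.quotG_adj x⟩)
    ⟨fun x x' h => Subtype.ext <| eq_of_blockDart_injective hsep (σ.trans' x.2 (σ.symm' x'.2))
      (Quotient.exact (congrArg Subtype.val h)),
    fun C => by
      obtain ⟨x, hx, hC⟩ := hm.exists_of_quotG_adj C.2
      exact ⟨⟨x, Quotient.exact hx⟩, Subtype.ext hC⟩⟩

noncomputable def induceIsoOrbitalGraph (hm : IsExternalNeighborMap Γ σ m)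
    (hsep : Function.Injective (blockDart σ m)) (b : V) :
    Γ.induce {x | σ.r x b} ≃g
      orbitalGraph (quotG Γ σ) (Quotient.mk σ b) (blockPairs Γ σ b) where
  toEquiv := blockEquivNeighborSet hm hsep b
  map_rel_iff' {x x'} := by
    rw [orbitalGraph, fromRel_adj, Sym2.eq_swap, or_self, induce_adj,
      (blockEquivNeighborSet hm hsep b).injective.ne_iff]
    change x ≠ x' ∧ s(Quotient.mk σ (m x'), Quotient.mk σ (m x)) ∈ _ ↔ _
    rw [hm.mk_mem_blockPairs_iff hsep x'.2 x.2, Γ.adj_comm]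
    exact and_iff_right_of_imp fun h => Subtype.coe_ne_coe.1 h.ne

noncomputable def dartEquiv (hm : IsExternalNeighborMap Γ σ m)
    (hsep : Function.Injective (blockDart σ m)) :
    V ≃ {p : Quotient σ × Quotient σ // (quotG Γ σ).Adj p.1 p.2} :=
  Equiv.ofBijective (fun x => ⟨blockDart σ m x, hm.quotG_adj x⟩)
    ⟨fun _ _ h => hsep (congrArg Subtype.val h), fun C => by
      obtain ⟨x, h₁, h₂⟩ := hm.exists_of_quotG_adj C.2
      exact ⟨x, Subtype.ext (Prod.ext h₁ h₂)⟩⟩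

end IsExternalNeighborMap

end

section

variable {Γ : SimpleGraph V} {G : Subgroup (Equiv.Perm V)} {σ : Setoid V}

theorem rel_apply_iff (hσinv : ∀ g ∈ G, ∀ a b : V, σ.r a b → σ.r (g a) (g b))
    {g : Equiv.Perm V} (hg : g ∈ G) (a b : V) : σ.r (g a) (g b) ↔ σ.r a b :=
  ⟨fun h => by simpa using hσinv g⁻¹ (inv_mem hg) _ _ h, hσinv g hg a b⟩

theorem exists_mem_inducedPerms (hσinv : ∀ g ∈ G, ∀ a b : V, σ.r a b → σ.r (g a) (g b))
    {g : Equiv.Perm V} (hg : g ∈ G) :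
    ∃ π ∈ inducedPerms G σ, ∀ a, π (Quotient.mk σ a) = Quotient.mk σ (g a) :=
  ⟨Quotient.congr g fun a b => (rel_apply_iff hσinv hg a b).symm, ⟨g, hg, fun _ => rfl⟩,
    fun _ => rfl⟩

theorem map_mem_blockPairs (hGaut : ∀ g ∈ G, IsAut Γ g)
    (hσinv : ∀ g ∈ G, ∀ a b : V, σ.r a b → σ.r (g a) (g b)) {b : V}
    {π : Equiv.Perm (Quotient σ)} (hπ : π ∈ inducedPerms G σ)
    (hπb : π (Quotient.mk σ b) = Quotient.mk σ b) {p : Sym2 (Quotient σ)}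
    (hp : p ∈ blockPairs Γ σ b) : p.map π ∈ blockPairs Γ σ b := by
  obtain ⟨g, hg, hπ⟩ := hπ
  obtain ⟨u, w, y, z, hu, hw, huw, huy, hy, hwz, hz, rfl⟩ := hp
  have hgb : σ.r (g b) b := Quotient.exact ((hπ b).symm.trans hπb)
  have hblock (a : V) : σ.r (g a) b ↔ σ.r a b :=
    ⟨fun h => (rel_apply_iff hσinv hg a b).1 (σ.trans' h (σ.symm' hgb)),
      fun h => σ.trans' ((rel_apply_iff hσinv hg a b).2 h) hgb⟩
  have hadj := hGaut g hg
  exact ⟨g u, g w, g y, g z, (hblock u).2 hu, (hblock w).2 hw, (hadj u w).2 huw,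
    (hadj u y).2 huy, (hblock y).not.2 hy, (hadj w z).2 hwz, (hblock z).not.2 hz,
    by rw [Sym2.map_mk, hπ, hπ]⟩

theorem exists_isExternalNeighborMap (hGaut : ∀ g ∈ G, IsAut Γ g)
    (hGtrans : ∀ a b : V, ∃ g ∈ G, g a = b)
    (hσinv : ∀ g ∈ G, ∀ a b : V, σ.r a b → σ.r (g a) (g b)) {b : V}
    (hb : ∃! y, Γ.Adj b y ∧ ¬ σ.r y b) : ∃ m, IsExternalNeighborMap Γ σ m := by
  have hunique (x : V) : ∃! y, Γ.Adj x y ∧ ¬ σ.r y x := by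
    obtain ⟨g, hg, rfl⟩ := hGtrans x b
    refine (Equiv.existsUnique_congr g fun y => ?_).2 hb
    rw [hGaut g hg, rel_apply_iff hσinv hg]
  choose m hm using fun x => (hunique x).exists
  exact ⟨m, fun x y => ⟨fun h => (hunique x).unique h (hm x), fun h => h ▸ hm x⟩⟩

namespace IsExternalNeighborMap

variable {m : V → V}

theorem blockDart_injective (hGaut : ∀ g ∈ G, IsAut Γ g)
    (hGtrans : ∀ a b : V, ∃ g ∈ G, g a = b)
    (hσinv : ∀ g ∈ G, ∀ a b : V, σ.r a b → σ.r (g a) (g b))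
    (hm : IsExternalNeighborMap Γ σ m) {b : V}
    (hb : ∀ x x', σ.r x b → σ.r x' b → σ.r (m x) (m x') → x = x') :
    Function.Injective (blockDart σ m) := by
  intro x x' h
  obtain ⟨hxx', hmm'⟩ := Prod.ext_iff.1 h
  obtain ⟨g, hg, hgx⟩ := hGtrans x b
  have hσg := rel_apply_iff hσinv hg
  apply g.injective
  refine hb _ _ (hgx ▸ σ.refl' _) (hgx ▸ (hσg x' x).2 (σ.symm' (Quotient.exact hxx'))) ?_
  rw [← hm.map_apply (hGaut g hg) hσg, ← hm.map_apply (hGaut g hg) hσg, hσg]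
  exact Quotient.exact hmm'

theorem exists_inducedPerms_mem_blockPairs_iff (hGaut : ∀ g ∈ G, IsAut Γ g)
    (hGtrans : ∀ a b : V, ∃ g ∈ G, g a = b)
    (hσinv : ∀ g ∈ G, ∀ a b : V, σ.r a b → σ.r (g a) (g b))
    (hm : IsExternalNeighborMap Γ σ m)
    (hsep : Function.Injective (blockDart σ m))
    {b x x' : V} (hxx' : σ.r x x') :
    (∃ π ∈ inducedPerms G σ, π (Quotient.mk σ x) = Quotient.mk σ b ∧
      s(π (Quotient.mk σ (m x)), π (Quotient.mk σ (m x'))) ∈ blockPairs Γ σ b) ↔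
      Γ.Adj x x' := by
  constructor
  · rintro ⟨π, ⟨g, hg, hπ⟩, hπx, hp⟩
    have hσg := rel_apply_iff hσinv hg
    have hgx : σ.r (g x) b := Quotient.exact ((hπ x).symm.trans hπx)
    have hgx' : σ.r (g x') b := σ.trans' ((hσg x' x).2 (σ.symm' hxx')) hgx
    rw [hπ, hπ, hm.map_apply (hGaut g hg) hσg, hm.map_apply (hGaut g hg) hσg,
      hm.mk_mem_blockPairs_iff hsep hgx hgx'] at hp
    exact (hGaut g hg x x').1 hp
  · intro hadj
    obtain ⟨g, hg, hgx⟩ := hGtrans x b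
    obtain ⟨π, hπG, hπ⟩ := exists_mem_inducedPerms hσinv hg
    have hσg := rel_apply_iff hσinv hg
    refine ⟨π, hπG, by rw [hπ, hgx], ?_⟩
    rw [hπ, hπ, hm.map_apply (hGaut g hg) hσg, hm.map_apply (hGaut g hg) hσg,
      hm.mk_mem_blockPairs_iff hsep (hgx ▸ σ.refl' _) (hgx ▸ (hσg x' x).2 (σ.symm' hxx'))]
    exact (hGaut g hg x x').2 hadj

noncomputable def isoTruncT (hGaut : ∀ g ∈ G, IsAut Γ g)
    (hGtrans : ∀ a b : V, ∃ g ∈ G, g a = b)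
    (hσinv : ∀ g ∈ G, ∀ a b : V, σ.r a b → σ.r (g a) (g b))
    (hm : IsExternalNeighborMap Γ σ m)
    (hsep : Function.Injective (blockDart σ m)) (b : V) :
    Γ ≃g truncT (quotG Γ σ) (inducedPerms G σ) (Quotient.mk σ b) (blockPairs Γ σ b) where
  toEquiv := dartEquiv hm hsep
  map_rel_iff' {x x'} := by
    have hrel (x x' : V) :
        (Quotient.mk σ x' = Quotient.mk σ (m x) ∧ Quotient.mk σ (m x') = Quotient.mk σ x ∨
          Quotient.mk σ x = Quotient.mk σ x' ∧ ∃ π ∈ inducedPerms G σ,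
            π (Quotient.mk σ x) = Quotient.mk σ b ∧
            s(π (Quotient.mk σ (m x)), π (Quotient.mk σ (m x'))) ∈ blockPairs Γ σ b) ↔
          Γ.Adj x x' := by
      rw [hm.adj_iff, hm.reverse_dart_iff hsep, Quotient.eq]
      exact or_congr_right (and_congr_right fun hxx' =>
        exists_inducedPerms_mem_blockPairs_iff hGaut hGtrans hσinv hm hsep hxx')
    rw [truncT, fromRel_adj, (dartEquiv hm hsep).injective.ne_iff]
    refine (and_congr_right fun _ => or_congr (hrel x x') (hrel x' x)).trans ?_
    rw [Γ.adj_comm x' x, or_self]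
    exact and_iff_right_of_imp Adj.ne

end IsExternalNeighborMap

end

theorem stmt14_general {V : Type*}
    (Γ : SimpleGraph V) (G : Subgroup (Equiv.Perm V))
    (hGaut : ∀ g ∈ G, IsAut Γ g)
    (hGtrans : ∀ a b : V, ∃ g ∈ G, g a = b)
    (σ : Setoid V)
    (hσinv : ∀ g ∈ G, ∀ a b : V, σ.r a b → σ.r (g a) (g b))
    (b₀ : V) (B : Set V) (hB : B = {x : V | σ.r x b₀})
    (hBout : ∀ x ∈ B, ∃! y : V, Γ.Adj x y ∧ y ∉ B)
    (hBsep : ∀ x ∈ B, ∀ x' ∈ B, x ≠ x' → ∀ y y' : V, Γ.Adj x y → Γ.Adj x' y' →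
      y ∉ B → y' ∉ B → ¬ σ.r y y')
    (Ghat : Set (Equiv.Perm (Quotient σ)))
    (hGhat : Ghat = {π : Equiv.Perm (Quotient σ) |
      ∃ g ∈ G, ∀ a : V, π (Quotient.mk σ a) = Quotient.mk σ (g a)})
    (OB : Set (Sym2 (Quotient σ)))
    (hOB : OB = {p : Sym2 (Quotient σ) | ∃ u w y z : V, u ∈ B ∧ w ∈ B ∧ Γ.Adj u w ∧
      Γ.Adj u y ∧ y ∉ B ∧ Γ.Adj w z ∧ z ∉ B ∧
      p = s(Quotient.mk σ y, Quotient.mk σ z)}) :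
    ((∀ p ∈ OB, ¬ p.IsDiag ∧ ∀ C ∈ p, (quotG Γ σ).Adj (Quotient.mk σ b₀) C) ∧
      (∀ p ∈ OB, ∀ π ∈ Ghat, π (Quotient.mk σ b₀) = Quotient.mk σ b₀ →
        p.map ⇑π ∈ OB)) ∧
    Nonempty ((orbitalGraph (quotG Γ σ) (Quotient.mk σ b₀) OB) ≃g (Γ.induce B)) ∧
    Nonempty (Γ ≃g truncT (quotG Γ σ) Ghat (Quotient.mk σ b₀) OB) := by
  subst hB hGhat hOB
  obtain ⟨m, hm⟩ :=
    exists_isExternalNeighborMap hGaut hGtrans hσinv (hBout b₀ (σ.refl' b₀))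
  have hsep := hm.blockDart_injective hGaut hGtrans hσinv fun x x' hx hx' h =>
    by_contra fun hne => hBsep x hx x' hx' hne _ _ (hm.adj x) (hm.adj x')
      (hm.not_rel_of_rel hx) (hm.not_rel_of_rel hx') h
  exact ⟨⟨fun _ hp => ⟨hm.not_isDiag_of_mem_blockPairs hsep hp,
      fun _ => hm.quotG_adj_of_mem_blockPairs hp⟩, fun _ hp _ hπ hπb =>
      map_mem_blockPairs hGaut hσinv hπ hπb hp⟩,
    ⟨(hm.induceIsoOrbitalGraph hsep b₀).symm⟩,
    ⟨hm.isoTruncT hGaut hGtrans hσinv hsep b₀⟩⟩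

/-- In the situation of the previous theorem, identify `G` with its
faithful induced action `Ĝ` on the quotient graph `Γ_𝔅` and let `O_B` be the set of all
pairs `{B_u, B_w}` of blocks where `u, w ∈ B` are adjacent in `Γ` and `B_x` is the block
containing the unique neighbor of `x ∈ B` outside `B`. Then `O_B` is a union of orbits
of the action of the stabilizer of `B` in `Ĝ` on the `2`-subsets of the neighborhood of
`B` in `Γ_𝔅`, the orbital graph `(Γ_𝔅(B), O_B)` is isomorphic to the subgraph of `Γ`
induced on `B`, and `Γ` is isomorphic to the generalized truncation `T(Γ_𝔅, Ĝ; O_B)`. -/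
theorem stmt14 {V : Type*} [Fintype V] [DecidableEq V]
    (Γ : SimpleGraph V) (G : Subgroup (Equiv.Perm V))
    (hGaut : ∀ g ∈ G, IsAut Γ g)
    (hGtrans : ∀ a b : V, ∃ g ∈ G, g a = b)
    (σ : Setoid V)
    (hσinv : ∀ g ∈ G, ∀ a b : V, σ.r a b → σ.r (g a) (g b))
    (hnontriv₁ : ∃ a b : V, σ.r a b ∧ a ≠ b) (hnontriv₂ : ∃ a b : V, ¬ σ.r a b)
    (b₀ : V) (B : Set V) (hB : B = {x : V | σ.r x b₀})
    (hBout : ∀ x ∈ B, ∃! y : V, Γ.Adj x y ∧ y ∉ B)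
    (hBsep : ∀ x ∈ B, ∀ x' ∈ B, x ≠ x' → ∀ y y' : V, Γ.Adj x y → Γ.Adj x' y' →
      y ∉ B → y' ∉ B → ¬ σ.r y y')
    (Ghat : Set (Equiv.Perm (Quotient σ)))
    (hGhat : Ghat = {π : Equiv.Perm (Quotient σ) |
      ∃ g ∈ G, ∀ a : V, π (Quotient.mk σ a) = Quotient.mk σ (g a)})
    (OB : Set (Sym2 (Quotient σ)))
    (hOB : OB = {p : Sym2 (Quotient σ) | ∃ u w y z : V, u ∈ B ∧ w ∈ B ∧ Γ.Adj u w ∧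
      Γ.Adj u y ∧ y ∉ B ∧ Γ.Adj w z ∧ z ∉ B ∧
      p = s(Quotient.mk σ y, Quotient.mk σ z)}) :
    ((∀ p ∈ OB, ¬ p.IsDiag ∧ ∀ C ∈ p, (quotG Γ σ).Adj (Quotient.mk σ b₀) C) ∧
      (∀ p ∈ OB, ∀ π ∈ Ghat, π (Quotient.mk σ b₀) = Quotient.mk σ b₀ →
        p.map ⇑π ∈ OB)) ∧
    Nonempty ((orbitalGraph (quotG Γ σ) (Quotient.mk σ b₀) OB) ≃g (Γ.induce B)) ∧
    Nonempty (Γ ≃g truncT (quotG Γ σ) Ghat (Quotient.mk σ b₀) OB) :=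
  stmt14_general Γ G hGaut hGtrans σ hσinv b₀ B hB hBout hBsep Ghat hGhat OB hOB
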